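/- Let n ≥ 2, let λ₁, …, λ_n be complex numbers, let F be the n-by-n discrete Fourier transform matrix with entries f_{ij} = ω^{(i−1)(j−1)}/√n where ω = exp(−2πi/n), let D = diag(λ₁, …, λ_n), and let A = F D F*. Then for every k ∈ {1, …, n} and every pair of indices i ≠ j, the midpoint (λ_i + λ_j)/2 belongs to the field of values of the principal submatrix A_{(k)}. In particular, F(A_{(k)}) is inscribed in the polygon ∂ conv(λ₁, …, λ_n) with points of tangency at the midpoints of its sides. -/

import Mathlib

open Matrix Complex

/-- The field of values (numerical range) of a complex matrix:
`F(A) = { x* A x : x* x = 1 }`. -/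
def fov {n : ℕ} (A : Matrix (Fin n) (Fin n) ℂ) : Set ℂ :=
  {z | ∃ x : Fin n → ℂ, star x ⬝ᵥ x = 1 ∧ star x ⬝ᵥ A.mulVec x = z}

/-- The principal submatrix `A_{(k)}` obtained by deleting the `k`-th row and column. -/
def subAt {n : ℕ} (A : Matrix (Fin (n + 1)) (Fin (n + 1)) ℂ) (k : Fin (n + 1)) :
    Matrix (Fin n) (Fin n) ℂ :=
  A.submatrix k.succAbove k.succAbove

/-! The columns `f_m` of a unitary `U` are orthonormal eigenvectors of `A = U diag(λ) U*`, so for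
`i ≠ j` and `|c| = 1` the unit vector `y = (f_i + c f_j)/√2` has `y* A y = (λ_i + λ_j)/2`. When
`|U_{ki}| = |U_{kj}| ≠ 0` the phase `c` can be chosen to make `y_k = 0`; then `y` with its `k`-th
entry removed is a unit vector giving the same value for `A_{(k)}`. All entries of the DFT matrix
have the same modulus `1/√n`, so this applies to every `k`, `i`, `j`. -/

section DeleteIndex

variable {R : Type*} [NonUnitalNonAssocSemiring R] {n : ℕ}

theorem dotProduct_comp_succAbove_of_apply_eq_zero (u : Fin (n + 1) → R)
    {v : Fin (n + 1) → R} {k : Fin (n + 1)} (hv : v k = 0) :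
    (u ∘ k.succAbove) ⬝ᵥ (v ∘ k.succAbove) = u ⬝ᵥ v := by
  simp only [dotProduct, Function.comp_apply, Fin.sum_univ_succAbove _ k, hv, mul_zero, zero_add]

theorem submatrix_succAbove_mulVec_of_apply_eq_zero (A : Matrix (Fin (n + 1)) (Fin (n + 1)) R)
    {v : Fin (n + 1) → R} {k : Fin (n + 1)} (hv : v k = 0) :
    A.submatrix k.succAbove k.succAbove *ᵥ (v ∘ k.succAbove) = (A *ᵥ v) ∘ k.succAbove := by
  ext q
  exact dotProduct_comp_succAbove_of_apply_eq_zero _ hv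

end DeleteIndex

theorem dotProduct_mulVec_mem_fov_subAt {n : ℕ} (A : Matrix (Fin (n + 1)) (Fin (n + 1)) ℂ)
    {k : Fin (n + 1)} {y : Fin (n + 1) → ℂ} (hyk : y k = 0) (hy : star y ⬝ᵥ y = 1) :
    star y ⬝ᵥ A *ᵥ y ∈ fov (subAt A k) := by
  have hstar : (star y) k = 0 := by simp [hyk]
  refine ⟨y ∘ k.succAbove, ?_, ?_⟩
  · rw [← hy, ← dotProduct_comp_succAbove_of_apply_eq_zero _ hyk]
    rfl
  · rw [subAt, submatrix_succAbove_mulVec_of_apply_eq_zero _ hyk, dotProduct_comm,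
      dotProduct_comm (star y)]
    exact dotProduct_comp_succAbove_of_apply_eq_zero _ hstar

section Unitary

variable {m R : Type*} [Fintype m] [CommRing R] [StarRing R]

theorem star_mulVec_dotProduct_mulVec (U M : Matrix m m R) (w : m → R) :
    star (U *ᵥ w) ⬝ᵥ M *ᵥ (U *ᵥ w) = star w ⬝ᵥ (Uᴴ * M * U) *ᵥ w := by
  rw [star_mulVec, ← dotProduct_mulVec, mulVec_mulVec, mulVec_mulVec, Matrix.mul_assoc]

theorem star_mulVec_dotProduct_mulVec_of_mem_unitaryGroup [DecidableEq m] {U : Matrix m m R}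
    (hU : U ∈ unitaryGroup m R) (w : m → R) : star (U *ᵥ w) ⬝ᵥ U *ᵥ w = star w ⬝ᵥ w := by
  have h : Uᴴ * U = 1 := mem_unitaryGroup_iff'.1 hU
  simpa [h] using star_mulVec_dotProduct_mulVec U 1 w

theorem star_mulVec_dotProduct_conj_mulVec_of_mem_unitaryGroup [DecidableEq m]
    {U : Matrix m m R} (hU : U ∈ unitaryGroup m R) (D : Matrix m m R) (w : m → R) :
    star (U *ᵥ w) ⬝ᵥ (U * D * Uᴴ) *ᵥ (U *ᵥ w) = star w ⬝ᵥ D *ᵥ w := by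
  have h : Uᴴ * U = 1 := mem_unitaryGroup_iff'.1 hU
  rw [star_mulVec_dotProduct_mulVec, Matrix.mul_assoc, Matrix.mul_assoc, h, Matrix.mul_one,
    ← Matrix.mul_assoc, h, Matrix.one_mul]

theorem star_dotProduct_diagonal_mulVec_single_add_single [DecidableEq m] (d : m → R)
    {i j : m} (hij : i ≠ j) (a b : R) :
    star (Pi.single i a + Pi.single j b) ⬝ᵥ diagonal d *ᵥ (Pi.single i a + Pi.single j b) =
      d i * (star a * a) + d j * (star b * b) := by
  simp only [mulVec_diagonal, dotProduct, Pi.add_apply, Pi.star_apply, Pi.single_apply]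
  rw [Finset.sum_eq_add i j hij (fun x _ hx => by simp [hx.1, hx.2]) (by simp) (by simp)]
  simp only [↓reduceIte, hij, hij.symm, add_zero, zero_add]
  ring

theorem star_single_add_single_dotProduct [DecidableEq m] {i j : m} (hij : i ≠ j) (a b : R) :
    star (Pi.single i a + Pi.single j b) ⬝ᵥ (Pi.single i a + Pi.single j b) =
      star a * a + star b * b := by
  simpa using star_dotProduct_diagonal_mulVec_single_add_single (fun _ => (1 : R)) hij a b

end Unitary

theorem midpoint_mem_fov_subAt_of_mem_unitaryGroup {n : ℕ}
    {U : Matrix (Fin (n + 1)) (Fin (n + 1)) ℂ} (hU : U ∈ unitaryGroup (Fin (n + 1)) ℂ)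
    (lam : Fin (n + 1) → ℂ) {k i j : Fin (n + 1)} (hij : i ≠ j)
    (hnorm : ‖U k i‖ = ‖U k j‖) (hkj : U k j ≠ 0) :
    (lam i + lam j) / 2 ∈ fov (subAt (U * diagonal lam * Uᴴ) k) := by
  -- `w` has entries of modulus `1/√2` at `i` and `j`, with phases making `(U *ᵥ w) k` vanish
  set s : ℂ := ((√2 * ‖U k j‖ : ℝ) : ℂ)⁻¹
  set w : Fin (n + 1) → ℂ := Pi.single i (U k j * s) + Pi.single j (-U k i * s)
  have hhalf : ∀ z : ℂ, ‖z‖ = ‖U k j‖ → star (z * s) * (z * s) = 1 / 2 := by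
    intro z hz
    have hpos : 0 < ‖U k j‖ := norm_pos_iff.2 hkj
    have hnorm_sq : ‖z * s‖ ^ 2 = 1 / 2 := by
      rw [norm_mul, hz, norm_inv, norm_real, Real.norm_of_nonneg (by positivity)]
      field_simp
      rw [Real.sq_sqrt zero_le_two]
    rw [RCLike.star_def, conj_mul', ← ofReal_pow, hnorm_sq]
    norm_num
  have hwi : star (U k j * s) * (U k j * s) = 1 / 2 := hhalf _ rfl
  have hwj : star (-U k i * s) * (-U k i * s) = 1 / 2 := hhalf _ (by rw [norm_neg, hnorm])
  have hyk : (U *ᵥ w) k = 0 := by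
    change U k ⬝ᵥ w = 0
    rw [dotProduct_add, dotProduct_single, dotProduct_single]
    ring
  have hy : star (U *ᵥ w) ⬝ᵥ U *ᵥ w = 1 := by
    rw [star_mulVec_dotProduct_mulVec_of_mem_unitaryGroup hU,
      star_single_add_single_dotProduct hij, hwi, hwj]
    norm_num
  convert dotProduct_mulVec_mem_fov_subAt _ hyk hy using 1
  rw [star_mulVec_dotProduct_conj_mulVec_of_mem_unitaryGroup hU,
    star_dotProduct_diagonal_mulVec_single_add_single _ hij, hwi, hwj]
  ring

theorem Complex.isPrimitiveRoot_exp_neg (N : ℕ) (hN : N ≠ 0) :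
    IsPrimitiveRoot (exp (-(2 * Real.pi * I) / N)) N := by
  rw [neg_div, exp_neg]
  exact (isPrimitiveRoot_exp N hN).inv

noncomputable def dftMatrix (N : ℕ) (ζ : ℂ) : Matrix (Fin N) (Fin N) ℂ :=
  of fun i j => ζ ^ ((i : ℕ) * j) / √N

namespace IsPrimitiveRoot

variable {ζ : ℂ} {N : ℕ}

theorem sum_star_pow_mul_mul_pow_mul (hζ : IsPrimitiveRoot ζ N) (a b : Fin N) :
    ∑ p : Fin N, star (ζ ^ ((p : ℕ) * a)) * ζ ^ ((p : ℕ) * b) = if a = b then (N : ℂ) else 0 := by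
  have hN : N ≠ 0 := a.pos.ne'
  have hstar : star ζ = ζ⁻¹ := (inv_eq_conj (hζ.norm'_eq_one hN)).symm
  set μ := ζ⁻¹ ^ (a : ℕ) * ζ ^ (b : ℕ)
  have hterm : ∀ p : Fin N, star (ζ ^ ((p : ℕ) * a)) * ζ ^ ((p : ℕ) * b) = μ ^ (p : ℕ) := by
    intro p
    rw [star_pow, hstar]
    ring
  simp_rw [hterm]
  rw [Fin.sum_univ_eq_sum_range (μ ^ ·)]
  split_ifs with hab
  · have hμ : μ = 1 := by simp [μ, hab, hζ.ne_zero hN]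
    simp [hμ]
  · have hμ : μ ≠ 1 := by
      intro h
      refine hab (Fin.ext (hζ.pow_inj a.isLt b.isLt ?_))
      rw [← inv_mul_eq_one₀ (pow_ne_zero _ (hζ.ne_zero hN)), ← inv_pow]
      exact h
    have hμN : μ ^ N = 1 := by
      rw [mul_pow, ← pow_mul, ← pow_mul, mul_comm _ N, mul_comm _ N, pow_mul, pow_mul, inv_pow,
        hζ.pow_eq_one]
      simp
    rw [geom_sum_eq hμ, hμN, sub_self, zero_div]

theorem dftMatrix_mem_unitaryGroup (hζ : IsPrimitiveRoot ζ N) :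
    dftMatrix N ζ ∈ unitaryGroup (Fin N) ℂ := by
  rw [mem_unitaryGroup_iff']
  ext a b
  have hN : (N : ℂ) ≠ 0 := Nat.cast_ne_zero.2 a.pos.ne'
  have hsqrt : ((√N : ℝ) : ℂ) * (√N : ℝ) = N := by
    rw [← ofReal_mul, Real.mul_self_sqrt (Nat.cast_nonneg N), ofReal_natCast]
  calc (star (dftMatrix N ζ) * dftMatrix N ζ) a b
      = (∑ p : Fin N, star (ζ ^ ((p : ℕ) * a)) * ζ ^ ((p : ℕ) * b)) / N := by
        simp only [mul_apply, star_apply, dftMatrix, of_apply, star_div₀, Complex.star_def,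
          conj_ofReal, Finset.sum_div]
        refine Finset.sum_congr rfl fun p _ => ?_
        rw [← hsqrt]
        ring
    _ = (1 : Matrix (Fin N) (Fin N) ℂ) a b := by
        rw [hζ.sum_star_pow_mul_mul_pow_mul, one_apply]
        split_ifs <;> simp [hN]

theorem norm_dftMatrix_apply (hζ : IsPrimitiveRoot ζ N) (i j : Fin N) :
    ‖dftMatrix N ζ i j‖ = (√N)⁻¹ := by
  rw [dftMatrix, of_apply, norm_div, norm_pow, hζ.norm'_eq_one i.pos.ne', one_pow, norm_real,
    Real.norm_of_nonneg (Real.sqrt_nonneg _), one_div]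

end IsPrimitiveRoot

theorem dft_midpoints_mem_fov_deleted_general {n : ℕ}
    (lam : Fin (n + 1) → ℂ) (ω : ℂ)
    (hω : ω = Complex.exp (-(2 * Real.pi * Complex.I) / (n + 1)))
    (F : Matrix (Fin (n + 1)) (Fin (n + 1)) ℂ)
    (hF : F = Matrix.of fun i j : Fin (n + 1) =>
      ω ^ ((i : ℕ) * (j : ℕ)) / Real.sqrt (n + 1))
    (A : Matrix (Fin (n + 1)) (Fin (n + 1)) ℂ)
    (hA : A = F * Matrix.diagonal lam * Fᴴ) :
    ∀ k : Fin (n + 1), ∀ i j : Fin (n + 1), i ≠ j →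
      (lam i + lam j) / 2 ∈ fov (subAt A k) := by
  intro k i j hij
  have hprim : IsPrimitiveRoot ω (n + 1) := by
    simpa [hω] using isPrimitiveRoot_exp_neg (n + 1) n.succ_ne_zero
  have hdft : F = dftMatrix (n + 1) ω := by
    rw [hF, dftMatrix, Nat.cast_succ]
  have hnorm : ∀ p q, ‖F p q‖ = (√(n + 1 : ℕ))⁻¹ := hdft ▸ hprim.norm_dftMatrix_apply
  have hFk : F k j ≠ 0 := norm_ne_zero_iff.1 (by rw [hnorm]; positivity)
  rw [hA]
  exact midpoint_mem_fov_subAt_of_mem_unitaryGroup (hdft ▸ hprim.dftMatrix_mem_unitaryGroup) lam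
    hij (by rw [hnorm, hnorm]) hFk

/-- If `F` is the `(n+1)`-by-`(n+1)` DFT matrix (`n + 1 ≥ 2`), `D = diag(λ₁, …, λ_{n+1})`
and `A = F D F*`, then for every `k` and all `i ≠ j`, the midpoint `(λ_i + λ_j)/2` belongs
to `F(A_{(k)})`; i.e. `F(A_{(k)})` is inscribed in `∂ conv(λ₁, …, λ_{n+1})` with tangency at
the midpoints of the sides. -/
theorem dft_midpoints_mem_fov_deleted {n : ℕ} (hn : 1 ≤ n)
    (lam : Fin (n + 1) → ℂ) (ω : ℂ)
    (hω : ω = Complex.exp (-(2 * Real.pi * Complex.I) / (n + 1)))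
    (F : Matrix (Fin (n + 1)) (Fin (n + 1)) ℂ)
    (hF : F = Matrix.of fun i j : Fin (n + 1) =>
      ω ^ ((i : ℕ) * (j : ℕ)) / Real.sqrt (n + 1))
    (A : Matrix (Fin (n + 1)) (Fin (n + 1)) ℂ)
    (hA : A = F * Matrix.diagonal lam * Fᴴ) :
    ∀ k : Fin (n + 1), ∀ i j : Fin (n + 1), i ≠ j →
      (lam i + lam j) / 2 ∈ fov (subAt A k) :=
  dft_midpoints_mem_fov_deleted_general lam ω hω F hF A hA
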